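/- For every n ≥ 1 and all r, t ∈ {0,1}^n with r ≠ t, the total variation distance between the parity distributions D_r and D_t equals 1/2. -/
import Mathlib


/-- The parity function `χ_s(x) = x · s mod 2`. -/
def chi {n : ℕ} (s x : Fin n → ZMod 2) : ZMod 2 := ∑ i, s i * x i

/-- The parity `|x|` of a bitstring: the sum of its bits mod 2. -/
def par {n : ℕ} (x : Fin n → ZMod 2) : ZMod 2 := ∑ i, x i

/-- The parity distribution `D_s` on `{0,1}^{n+1}`:
`D_s(x,y) = 2^{-n}` if `χ_s(x) = y` and `0` otherwise. -/
noncomputable def Ddist {n : ℕ} (s : Fin n → ZMod 2) (x : Fin n → ZMod 2) (y : ZMod 2) : ℝ :=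
  if chi s x = y then ((2 : ℝ) ^ n)⁻¹ else 0

lemma chi_add_left {n : ℕ} (r t x : Fin n → ZMod 2) :
    chi (r + t) x = chi r x + chi t x := by
  simp [chi, add_mul, Finset.sum_add_distrib]

lemma chi_add_right {n : ℕ} (s x d : Fin n → ZMod 2) :
    chi s (x + d) = chi s x + chi s d := by
  simp [chi, mul_add, Finset.sum_add_distrib]

lemma card_chi_one {n : ℕ} (s : Fin n → ZMod 2) (hs : s ≠ 0) :
    2 * (Finset.univ.filter (fun x : Fin n → ZMod 2 => chi s x = 1)).card = 2 ^ n := by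
  obtain ⟨i, hi⟩ : ∃ i, s i ≠ 0 := by
    by_contra h; push_neg at h; exact hs (funext fun i => h i)
  have hsi : s i = 1 := by
    have h2 : ∀ a : ZMod 2, a ≠ 0 → a = 1 := by decide
    exact h2 _ hi
  set δ : Fin n → ZMod 2 := fun j => if j = i then 1 else 0 with hδ
  have hchiδ : chi s δ = 1 := by
    simp [chi, hδ, mul_ite, hsi]
  have hdd : ∀ x : Fin n → ZMod 2, (x + δ) + δ = x := by
    intro x
    funext j
    have h2 : ∀ a b : ZMod 2, a + b + b = a := by decide
    exact h2 _ _
  have hcard : (Finset.univ.filter (fun x : Fin n → ZMod 2 => chi s x = 1)).card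
      = (Finset.univ.filter (fun x : Fin n → ZMod 2 => ¬ chi s x = 1)).card := by
    apply Finset.card_bij' (fun x _ => x + δ) (fun x _ => x + δ)
    · intro a ha
      simp only [Finset.mem_filter, Finset.mem_univ, true_and] at ha ⊢
      rw [chi_add_right, hchiδ, ha]
      decide
    · intro a ha
      simp only [Finset.mem_filter, Finset.mem_univ, true_and] at ha ⊢
      rw [chi_add_right, hchiδ]
      have h2 : ∀ a : ZMod 2, a ≠ 1 → a + 1 = 1 := by decide
      exact h2 _ ha
    · intro a _; exact hdd a
    · intro a _; exact hdd a
  have htot := Finset.card_filter_add_card_filter_not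
    (s := (Finset.univ : Finset (Fin n → ZMod 2)))
    (p := fun x => chi s x = 1)
  rw [← hcard] at htot
  have huniv : (Finset.univ : Finset (Fin n → ZMod 2)).card = 2 ^ n := by
    simp [Finset.card_univ]
  omega

theorem tv_Ddist_eq_half (n : ℕ) (hn : 1 ≤ n) (r t : Fin n → ZMod 2) (hrt : r ≠ t) :
    (1 / 2 : ℝ) * ∑ x : Fin n → ZMod 2, ∑ y : ZMod 2, |Ddist r x y - Ddist t x y|
      = 1 / 2 := by
  set c : ℝ := ((2 : ℝ) ^ n)⁻¹ with hc
  have hcpos : 0 < c := by positivity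
  have hinner : ∀ x : Fin n → ZMod 2,
      (∑ y : ZMod 2, |Ddist r x y - Ddist t x y|)
        = if chi (r + t) x = 1 then 2 * c else 0 := by
    intro x
    have hsplit : (chi r x = 0 ∧ chi t x = 0 ∧ chi (r+t) x ≠ 1)
        ∨ (chi r x = 1 ∧ chi t x = 1 ∧ chi (r+t) x ≠ 1)
        ∨ (chi r x = 0 ∧ chi t x = 1 ∧ chi (r+t) x = 1)
        ∨ (chi r x = 1 ∧ chi t x = 0 ∧ chi (r+t) x = 1) := by
      rw [chi_add_left]
      generalize chi r x = a
      generalize chi t x = b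
      revert a b
      decide
    have huniv2 : (Finset.univ : Finset (ZMod 2)) = {0, 1} := by decide
    have hsum : (∑ y : ZMod 2, |Ddist r x y - Ddist t x y|)
        = |Ddist r x 0 - Ddist t x 0| + |Ddist r x 1 - Ddist t x 1| := by
      rw [huniv2, Finset.sum_pair (by decide : (0 : ZMod 2) ≠ 1)]
    rw [hsum]
    rcases hsplit with ⟨h1, h2, h3⟩ | ⟨h1, h2, h3⟩ | ⟨h1, h2, h3⟩ | ⟨h1, h2, h3⟩ <;>
      simp [Ddist, h1, h2, h3, ← hc, abs_of_pos hcpos, abs_of_neg (neg_neg_iff_pos.mpr hcpos)] <;>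
      ring
  rw [Finset.sum_congr rfl (fun x _ => hinner x)]
  rw [Finset.sum_ite, Finset.sum_const, Finset.sum_const, smul_zero, add_zero]
  have hs : r + t ≠ 0 := by
    intro h
    apply hrt
    funext i
    have := congrFun h i
    have h2 : ∀ a b : ZMod 2, a + b = 0 → a = b := by decide
    exact h2 _ _ this
  have hcard := card_chi_one (r + t) hs
  have hcardR : (2 : ℝ) * ((Finset.univ.filter
      (fun x : Fin n → ZMod 2 => chi (r + t) x = 1)).card : ℝ) = 2 ^ n := by
    exact_mod_cast congrArg (Nat.cast : ℕ → ℝ) hcard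
  rw [nsmul_eq_mul]
  have h2n : (2 : ℝ) ^ n ≠ 0 := by positivity
  rw [hc]
  field_simp
  nlinarith [hcardR]
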